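/- arXiv:1909.13864 — 2 statements merged into one kernel-verified Lean document; each statement's English description precedes it below -/
import Mathlib

section
/- Assume Conjecture A holds. Then for every positive integer n and every ring homomorphism φ₀ : F₀ → Mₙ(G₀), where F₀ and G₀ are division rings, there exist division rings F and G, ring embeddings ι_F : F₀ → F and ι_G : G₀ → G, and a tight ring embedding φ : F → Mₙ(G) such that φ(ι_F(x)) equals φ₀(x) with ι_G applied entrywise, for every x ∈ F₀. In particular, for every positive integer n there exist division rings F and G and a tight ring embedding φ : F → Mₙ(G). -/
/-!
Conjecture A realizes one prescribed block after enlarging `F` and `G`; for `n = 1` this is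
trivial, since `M₁(G) ≅ G`. Composing such enlargements realizes finitely many blocks at once,
and an ultraproduct of these extensions, indexed by the finite sets of blocks along an
ultrafilter refining `atTop`, realizes every block with entries in the current `G`. Iterating this
saturation `ω` times and passing to the direct limit yields a tight embedding: a matrix over the
limit already lives at some finite stage, and its blocks are realized at the next one.
-/


/-- `φ : F → Mₙ(α)` is `a`-tight: every possible upper-right `a × (n+1-a)` block
(rows `1,…,a`, columns `a,…,n`, one-indexed) is realized by some element of `F`. -/
def ATight {n : ℕ} {F α : Type*} (φ : F → Matrix (Fin n) (Fin n) α) (a : ℕ) : Prop :=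
  ∀ g : Matrix (Fin n) (Fin n) α, ∃ x : F, ∀ i j : Fin n,
    (i : ℕ) < a → a ≤ (j : ℕ) + 1 → φ x i j = g i j

/-- A witness for Conjecture A: division ring extensions `F ⊆ F′`, `G ⊆ G′` and an
embedding `φ′ : F′ → Mₙ(G′)` extending `φ` whose image contains a matrix whose
upper-right `a × (n+1-a)` block is the prescribed block of `A`. -/
structure ConjAWitness (n : ℕ) (F G : Type) [DivisionRing F] [DivisionRing G]
    (φ : F →+* Matrix (Fin n) (Fin n) G) (a : ℕ) (A : Matrix (Fin n) (Fin n) G) :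
    Type 1 where
  F' : Type
  G' : Type
  [instF' : DivisionRing F']
  [instG' : DivisionRing G']
  ιF : F →+* F'
  ιG : G →+* G'
  injF : Function.Injective ιF
  injG : Function.Injective ιG
  φ' : F' →+* Matrix (Fin n) (Fin n) G'
  injφ' : Function.Injective φ'
  compat : ∀ x : F, φ' (ιF x) = (φ x).map ⇑ιG
  exists_block : ∃ f' : F', ∀ i j : Fin n,
    (i : ℕ) < a → a ≤ (j : ℕ) + 1 → φ' f' i j = ιG (A i j)

/-- Conjecture A. -/
def ConjectureA : Prop :=
  ∀ (n : ℕ), 1 < n → ∀ (F G : Type) [DivisionRing F] [DivisionRing G],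
    ∀ φ : F →+* Matrix (Fin n) (Fin n) G, Function.Injective φ →
      ∀ a b : ℕ, 1 ≤ a → 1 ≤ b → a + b = n + 1 →
        ∀ A : Matrix (Fin n) (Fin n) G, Nonempty (ConjAWitness n F G φ a A)

/-- An extension of a ring homomorphism `φ₀ : F₀ → Mₙ(G₀)` to a tight embedding
`φ : F → Mₙ(G)` along division ring embeddings `F₀ → F`, `G₀ → G`. -/
structure TightCompletion (n : ℕ) (F₀ G₀ : Type) [DivisionRing F₀] [DivisionRing G₀]
    (φ₀ : F₀ →+* Matrix (Fin n) (Fin n) G₀) : Type 1 where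
  F : Type
  G : Type
  [instF : DivisionRing F]
  [instG : DivisionRing G]
  ιF : F₀ →+* F
  ιG : G₀ →+* G
  injF : Function.Injective ιF
  injG : Function.Injective ιG
  φ : F →+* Matrix (Fin n) (Fin n) G
  injφ : Function.Injective φ
  compat : ∀ x : F₀, φ (ιF x) = (φ₀ x).map ⇑ιG
  tight : ∀ a : ℕ, 1 ≤ a → a ≤ n → ATight ⇑φ a

/-- A pair of division rings `F`, `G` together with a tight embedding `F → Mₙ(G)`. -/
structure TightPair (n : ℕ) : Type 1 where
  F : Type
  G : Type
  [instF : DivisionRing F]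
  [instG : DivisionRing G]
  φ : F →+* Matrix (Fin n) (Fin n) G
  injφ : Function.Injective φ
  tight : ∀ a : ℕ, 1 ≤ a → a ≤ n → ATight ⇑φ a

def Filter.productRingCon {α : Type*} (l : Filter α) (R : α → Type*) [∀ a, Add (R a)]
    [∀ a, Mul (R a)] : RingCon (∀ a, R a) where
  __ := l.productSetoid R
  add' h₁ h₂ := (h₁.and h₂).mono fun _ h => by simp only [Pi.add_apply, h.1, h.2]
  mul' h₁ h₂ := (h₁.and h₂).mono fun _ h => by simp only [Pi.mul_apply, h.1, h.2]

abbrev Ultraproduct {α : Type*} (U : Ultrafilter α) (R : α → Type*) [∀ a, Ring (R a)] :=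
  ((U : Filter α).productRingCon R).Quotient

namespace Ultraproduct

variable {α : Type*} {U : Ultrafilter α} {R : α → Type*} [∀ a, Ring (R a)]

variable (U R) in
def mk : (∀ a, R a) →+* Ultraproduct U R := RingCon.mk' _

theorem mk_surjective : Function.Surjective (mk U R) := RingCon.mk'_surjective _

theorem mk_eq_mk_iff {x y : ∀ a, R a} : mk U R x = mk U R y ↔ ∀ᶠ a in U, x a = y a :=
  RingCon.eq _

theorem mk_eq_mk_of_eventually {x y : ∀ a, R a} (h : ∀ᶠ a in U, x a = y a) :
    mk U R x = mk U R y := mk_eq_mk_iff.mpr h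

instance [∀ a, Nontrivial (R a)] : Nontrivial (Ultraproduct U R) :=
  ⟨⟨mk U R 0, mk U R 1, fun h => by
    obtain ⟨a, ha⟩ := (mk_eq_mk_iff.mp h).exists
    exact zero_ne_one ha⟩⟩

noncomputable instance {D : α → Type*} [∀ a, DivisionRing (D a)] :
    DivisionRing (Ultraproduct U D) :=
  DivisionRing.ofIsUnitOrEqZero fun q => by
    obtain ⟨x, rfl⟩ := mk_surjective q
    rcases U.em (fun a => x a = 0) with hzero | hne
    · exact .inr (by rw [← map_zero (mk U D)]; exact mk_eq_mk_of_eventually hzero)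
    · refine .inl ⟨⟨mk U D x, mk U D x⁻¹, ?_, ?_⟩, rfl⟩ <;> rw [← map_mul, ← map_one (mk U D)] <;>
        exact mk_eq_mk_of_eventually (hne.mono fun a ha => by simp [ha])

variable {m : Type*} [Fintype m] [DecidableEq m] {S : α → Type*} [∀ a, Ring (S a)]

def liftMatrix (φ : ∀ a, R a →+* Matrix m m (S a)) :
    Ultraproduct U R →+* Matrix m m (Ultraproduct U S) :=
  RingCon.lift _ ((mk U S).mapMatrix.comp <| Matrix.piRingEquiv.symm.toRingHom.comp <|
      RingHom.pi fun a => (φ a).comp (Pi.evalRingHom R a))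
    fun _ _ hxy => (RingCon.ker_apply _).mpr <| Matrix.ext fun i j =>
      mk_eq_mk_of_eventually <| hxy.mono fun a ha => congrArg (fun r => φ a r i j) ha

theorem liftMatrix_mk_apply (φ : ∀ a, R a →+* Matrix m m (S a)) (x : ∀ a, R a) (i j : m) :
    liftMatrix φ (mk U R x) i j = mk U S (fun a => φ a (x a) i j) := rfl

end Ultraproduct

namespace DirectLimit

variable {ι : Type*} [Preorder ι] [IsDirectedOrder ι] [Nonempty ι] {G : ι → Type*}
  {T : ∀ ⦃i j : ι⦄, i ≤ j → Type*} {f : ∀ i j (h : i ≤ j), T h}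
  [∀ i j (h : i ≤ j), FunLike (T h) (G i) (G j)] [DirectedSystem G (f · · ·)]

theorem exists_eq_mk_of_finite {κ : Type*} [Finite κ] (z : κ → DirectLimit G f) :
    ∃ i, ∃ x : κ → G i, ∀ c, z c = ⟦⟨i, x c⟩⟧ := by
  classical
  have := Fintype.ofFinite κ
  choose k y hy using fun c => exists_eq_mk f (z c)
  obtain ⟨i, hi⟩ := Finset.exists_le (Finset.univ.image k)
  exact ⟨i, fun c => f _ _ (hi _ (Finset.mem_image_of_mem k (Finset.mem_univ c))) (y c),
    fun c => (hy c).trans (eq_of_le _ _ _)⟩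

variable [∀ i, Ring (G i)] [∀ i j h, RingHomClass (T h) (G i) (G j)]

variable (f) in
def ofRingHom (i : ι) : G i →+* DirectLimit G f where
  toFun x := ⟦⟨i, x⟩⟧
  map_one' := (one_def i).symm
  map_mul' x y := (mul_def i x y).symm
  map_zero' := (zero_def i).symm
  map_add' x y := (add_def i x y).symm

theorem ofRingHom_map {i j : ι} (h : i ≤ j) (x : G i) :
    ofRingHom f j (f i j h x) = ofRingHom f i x :=
  mk_apply i j x h

variable {C : Type*} [Ring C] (g : ∀ i, G i →+* C)
  (hg : ∀ i j h x, g i x = g j (f i j h x))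

variable (f) in
def liftRingHom : DirectLimit G f →+* C where
  toFun := DirectLimit.lift f (g · ·) hg
  map_one' := lift_one g hg
  map_mul' := lift_mul g hg
  map_zero' := lift_zero g hg
  map_add' := lift_add g hg

end DirectLimit

structure MatrixRep (n : ℕ) : Type 1 where
  F : Type
  G : Type
  [instF : DivisionRing F]
  [instG : DivisionRing G]
  φ : F →+* Matrix (Fin n) (Fin n) G

attribute [instance] MatrixRep.instF MatrixRep.instG

namespace MatrixRep

variable {n : ℕ}

structure Hom (s t : MatrixRep n) : Type where
  ιF : s.F →+* t.F
  ιG : s.G →+* t.G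
  map_φ : ∀ x : s.F, t.φ (ιF x) = (s.φ x).map ιG

def Hom.id (s : MatrixRep n) : s.Hom s := ⟨RingHom.id _, RingHom.id _, fun _ => rfl⟩

def Hom.comp {s t u : MatrixRep n} (g : t.Hom u) (f : s.Hom t) : s.Hom u where
  ιF := g.ιF.comp f.ιF
  ιG := g.ιG.comp f.ιG
  map_φ x := by simp [g.map_φ, f.map_φ, Matrix.map_map]

/-- `ATight s.φ a` unfolds to `∀ A, s.Realizes a A`. -/
def Realizes (s : MatrixRep n) (a : ℕ) (A : Matrix (Fin n) (Fin n) s.G) : Prop :=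
  ∃ x : s.F, ∀ i j : Fin n, (i : ℕ) < a → a ≤ (j : ℕ) + 1 → s.φ x i j = A i j

theorem Realizes.map {s t : MatrixRep n} (m : s.Hom t) {a : ℕ} {A : Matrix (Fin n) (Fin n) s.G}
    (h : s.Realizes a A) : t.Realizes a (A.map m.ιG) := by
  obtain ⟨x, hx⟩ := h
  exact ⟨m.ιF x, fun i j hi hj => by
    rw [m.map_φ, Matrix.map_apply, hx i j hi hj, Matrix.map_apply]⟩

theorem realizes_of_block_eq_empty (s : MatrixRep n) {a : ℕ} (ha : a = 0 ∨ n < a)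
    (A : Matrix (Fin n) (Fin n) s.G) : s.Realizes a A :=
  ⟨0, fun i j hi hj => by omega⟩

section Ultraproduct

variable {I : Type} (U : Ultrafilter I) (t : I → MatrixRep n)

noncomputable def ultraproduct : MatrixRep n where
  F := Ultraproduct U fun i => (t i).F
  G := Ultraproduct U fun i => (t i).G
  φ := Ultraproduct.liftMatrix fun i => (t i).φ

variable {U t}

noncomputable def Hom.toUltraproduct {s : MatrixRep n} (m : ∀ i, s.Hom (t i)) :
    s.Hom (ultraproduct U t) where
  ιF := (Ultraproduct.mk U _).comp (RingHom.pi fun i => (m i).ιF)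
  ιG := (Ultraproduct.mk U _).comp (RingHom.pi fun i => (m i).ιG)
  map_φ x := Matrix.ext fun p q => congrArg (Ultraproduct.mk U _) <| funext fun i => by
    simp [(m i).map_φ]

theorem realizes_ultraproduct {a : ℕ} {B : ∀ i, Matrix (Fin n) (Fin n) (t i).G}
    (h : ∀ᶠ i in U, (t i).Realizes a (B i)) :
    (ultraproduct U t).Realizes a (Matrix.of fun p q => Ultraproduct.mk U _ fun i => B i p q) :=
  ⟨Ultraproduct.mk U _ fun i => Classical.epsilon fun x =>
      ∀ p q : Fin n, (p : ℕ) < a → a ≤ (q : ℕ) + 1 → (t i).φ x p q = B i p q,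
    fun p q hp hq => (Ultraproduct.liftMatrix_mk_apply _ _ p q).trans <|
      Ultraproduct.mk_eq_mk_of_eventually <| h.mono fun _ hi => Classical.epsilon_spec hi p q hp hq⟩

end Ultraproduct

def BlockExtensionProperty (n : ℕ) : Prop :=
  ∀ (s : MatrixRep n) (a : ℕ) (A : Matrix (Fin n) (Fin n) s.G),
    ∃ (t : MatrixRep n) (m : s.Hom t), t.Realizes a (A.map m.ιG)

namespace BlockExtensionProperty

variable (h : BlockExtensionProperty n)
include h

theorem exists_hom_realizes_finset (s : MatrixRep n)
    (S : Finset (ℕ × Matrix (Fin n) (Fin n) s.G)) :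
    ∃ (t : MatrixRep n) (m : s.Hom t), ∀ p ∈ S, t.Realizes p.1 (p.2.map m.ιG) := by
  classical
  induction S using Finset.induction_on with
  | empty => exact ⟨s, .id s, by simp⟩
  | insert p S _ ih =>
    obtain ⟨t, m, hm⟩ := ih
    obtain ⟨u, m', hm'⟩ := h t p.1 (p.2.map m.ιG)
    refine ⟨u, m'.comp m, fun q hq => ?_⟩
    rcases Finset.mem_insert.mp hq with rfl | hq
    · exact hm'
    · exact (hm q hq).map m'

theorem exists_saturation (s : MatrixRep n) :
    ∃ (t : MatrixRep n) (m : s.Hom t),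
      ∀ a (A : Matrix (Fin n) (Fin n) s.G), t.Realizes a (A.map m.ιG) := by
  choose t m ht using h.exists_hom_realizes_finset s
  let U := Ultrafilter.of (Filter.atTop : Filter (Finset (ℕ × Matrix (Fin n) (Fin n) s.G)))
  refine ⟨ultraproduct U t, Hom.toUltraproduct m, fun a A => ?_⟩
  have hU : ∀ᶠ S in U, (t S).Realizes a (A.map (m S).ιG) :=
    Filter.Eventually.mono (Ultrafilter.of_le _ (Filter.eventually_ge_atTop {(a, A)})) fun S hS =>
      ht S _ (hS (Finset.mem_singleton_self _))
  exact realizes_ultraproduct hU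

end BlockExtensionProperty

section Colimit

variable {s : ℕ → MatrixRep n} (step : ∀ k, (s k).Hom (s (k + 1)))

def chainHom {i j : ℕ} (h : i ≤ j) : (s i).Hom (s j) :=
  Nat.leRecOn h (fun m => (step _).comp m) (Hom.id _)

theorem chainHom_refl (i : ℕ) : chainHom step (le_refl i) = Hom.id _ :=
  Nat.leRecOn_self _

theorem chainHom_succ (k : ℕ) : chainHom step (Nat.le_succ k) = step k :=
  Nat.leRecOn_succ' _

theorem chainHom_succ_right {i j : ℕ} (h : i ≤ j) (h' : i ≤ j + 1) :
    chainHom step h' = (step j).comp (chainHom step h) :=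
  Nat.leRecOn_succ h _

theorem chainHom_trans {i j k : ℕ} (hij : i ≤ j) (hjk : j ≤ k) :
    chainHom step (hij.trans hjk) = (chainHom step hjk).comp (chainHom step hij) := by
  induction k, hjk using Nat.le_induction with
  | base => rw [chainHom_refl]; rfl
  | succ k hjk ih =>
    rw [chainHom_succ_right step (hij.trans hjk), ih, chainHom_succ_right step hjk]; rfl

instance : DirectedSystem (fun k => (s k).F) fun _ _ h => (chainHom step h).ιF where
  map_self i x := by rw [chainHom_refl]; rfl
  map_map _ _ _ hij hjk x := by rw [chainHom_trans step hij hjk]; rfl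

instance : DirectedSystem (fun k => (s k).G) fun _ _ h => (chainHom step h).ιG where
  map_self i x := by rw [chainHom_refl]; rfl
  map_map _ _ _ hij hjk x := by rw [chainHom_trans step hij hjk]; rfl

noncomputable def colimit : MatrixRep n where
  F := DirectLimit (fun k => (s k).F) fun _ _ h => (chainHom step h).ιF
  G := DirectLimit (fun k => (s k).G) fun _ _ h => (chainHom step h).ιG
  φ := DirectLimit.liftRingHom _ (fun k => (DirectLimit.ofRingHom _ k).mapMatrix.comp (s k).φ)
    fun i j h x => by
      ext p q
      simp [(chainHom step h).map_φ, DirectLimit.ofRingHom_map]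

noncomputable def colimit.ι (k : ℕ) : (s k).Hom (colimit step) where
  ιF := DirectLimit.ofRingHom (fun _ _ h => (chainHom step h).ιF) k
  ιG := DirectLimit.ofRingHom (fun _ _ h => (chainHom step h).ιG) k
  map_φ _ := rfl

theorem colimit_realizes (hstep : ∀ k a (A : Matrix (Fin n) (Fin n) (s k).G),
      (s (k + 1)).Realizes a (A.map (step k).ιG))
    (a : ℕ) (A : Matrix (Fin n) (Fin n) (colimit step).G) : (colimit step).Realizes a A := by
  obtain ⟨k, B, hB⟩ := DirectLimit.exists_eq_mk_of_finite fun p : Fin n × Fin n => A p.1 p.2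
  convert (hstep k a (Matrix.of fun p q => B (p, q))).map (colimit.ι step (k + 1))
  ext p q
  rw [hB (p, q), ← chainHom_succ step k]
  exact (DirectLimit.ofRingHom_map _ _).symm

end Colimit

theorem BlockExtensionProperty.exists_tight_hom (h : BlockExtensionProperty n)
    (s₀ : MatrixRep n) : ∃ (t : MatrixRep n) (_ : s₀.Hom t), ∀ a, ATight t.φ a := by
  choose sat m hm using h.exists_saturation
  let s : ℕ → MatrixRep n := fun k => Nat.rec s₀ (fun _ t => sat t) k
  exact ⟨colimit fun k => m (s k), colimit.ι (s := s) _ 0, colimit_realizes _ fun k => hm (s k)⟩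

theorem blockExtensionProperty_of_conjectureA (hA : ConjectureA) (hn : 1 < n) :
    BlockExtensionProperty n := by
  intro s a A
  by_cases ha : 1 ≤ a ∧ a ≤ n
  · have : NeZero n := ⟨by omega⟩
    obtain ⟨w⟩ := hA n hn s.F s.G s.φ s.φ.injective a (n + 1 - a) ha.1 (by omega) (by omega) A
    let := w.instF'
    let := w.instG'
    exact ⟨⟨w.F', w.G', w.φ'⟩, ⟨w.ιF, w.ιG, w.compat⟩, w.exists_block⟩
  · exact ⟨s, .id s, s.realizes_of_block_eq_empty (by omega) _⟩

theorem blockExtensionProperty_one : BlockExtensionProperty 1 := fun s _ A =>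
  ⟨⟨s.G, s.G, Matrix.uniqueRingEquiv.symm.toRingHom⟩,
    ⟨Matrix.uniqueRingEquiv.toRingHom.comp s.φ, RingHom.id _,
      fun x => Matrix.uniqueRingEquiv.symm_apply_apply (s.φ x)⟩,
    Matrix.uniqueRingEquiv A,
    fun i j _ _ => congrFun₂ (Matrix.uniqueRingEquiv.symm_apply_apply A) i j⟩

theorem blockExtensionProperty (hA : ConjectureA) (hn : 1 ≤ n) : BlockExtensionProperty n := by
  rcases hn.eq_or_lt with rfl | hn
  exacts [blockExtensionProperty_one, blockExtensionProperty_of_conjectureA hA hn]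

end MatrixRep

/-- Assuming Conjecture A, every ring homomorphism from a division ring `F₀` to `Mₙ(G₀)`
(`G₀` a division ring) extends to a tight embedding `F → Mₙ(G)`; in particular, tight
embeddings exist for every positive `n`. -/
theorem stmt4 (hA : ConjectureA) :
    (∀ (n : ℕ), 1 ≤ n → ∀ (F₀ G₀ : Type) [DivisionRing F₀] [DivisionRing G₀],
      ∀ φ₀ : F₀ →+* Matrix (Fin n) (Fin n) G₀, Nonempty (TightCompletion n F₀ G₀ φ₀)) ∧
    (∀ n : ℕ, 1 ≤ n → Nonempty (TightPair n)) := by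
  have completion (n : ℕ) (hn : 1 ≤ n) (F₀ G₀ : Type) [DivisionRing F₀] [DivisionRing G₀]
      (φ₀ : F₀ →+* Matrix (Fin n) (Fin n) G₀) : Nonempty (TightCompletion n F₀ G₀ φ₀) := by
    have : NeZero n := ⟨by omega⟩
    obtain ⟨t, m, ht⟩ := (MatrixRep.blockExtensionProperty hA hn).exists_tight_hom ⟨F₀, G₀, φ₀⟩
    exact ⟨⟨t.F, t.G, m.ιF, m.ιG, m.ιF.injective, m.ιG.injective, t.φ, t.φ.injective, m.map_φ,
      fun a _ _ => ht a⟩⟩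
  refine ⟨completion, fun n hn => ?_⟩
  obtain ⟨c⟩ := completion n hn ℚ ℚ (Matrix.scalar (Fin n))
  let := c.instF
  let := c.instG
  exact ⟨⟨c.F, c.G, c.φ, c.injφ, c.tight⟩⟩
end

section
/- Let F be a division ring, G a division subring of F, and (f_i)_{i∈ℕ} a sequence in F with f_0 = 1 satisfying axioms (T4), (T5), (T6). Then for every k ≥ 1 and every f ∈ F there exist a ∈ L_{k−1} and s ∈ S_{k−1} with f = a + f_k·s. -/
/-- `L_k`: the left `G`-subspace of `F` spanned by `f_0, …, f_k`. -/
def Lset {F : Type*} [DivisionRing F] (G : Subring F) (f : ℕ → F) (k : ℕ) : Set F :=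
  {x | ∃ c : ℕ → F, (∀ i, c i ∈ G) ∧ x = ∑ i ∈ Finset.range (k + 1), c i * f i}

/-- `S_k = {a ∈ F : L_k · a ⊆ L_k}`. -/
def Sset {F : Type*} [DivisionRing F] (G : Subring F) (f : ℕ → F) (k : ℕ) : Set F :=
  {a | ∀ x ∈ Lset G f k, x * a ∈ Lset G f k}

/-- `D_0 = F`, and `D_k = {a ∈ F : L_{k-1} · a ⊆ L_k}` for `k ≥ 1`. -/
def Dset {F : Type*} [DivisionRing F] (G : Subring F) (f : ℕ → F) : ℕ → Set F
  | 0 => Set.univ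
  | k + 1 => {a | ∀ x ∈ Lset G f k, x * a ∈ Lset G f (k + 1)}

/-!
By induction on `k`, `F = L_k + f_{k+1} S_k`. The case `k = 0` is (T4). Given the case `k`,
write `r ∈ S_k ⊆ D_{k+1}` as `s + b t` using (T6); this gives `F = L_{k+1} + c S_{k+1}` with
`c = f_{k+1} b`. Decomposing `f_{k+2} = l + c t`, linear independence (T5) forces `t ≠ 0`, so
`c = (f_{k+2} - l) t⁻¹` and `F = L_{k+1} + f_{k+2} S_{k+1}`, provided `t⁻¹ ∈ S_{k+1}`: right
multiplication by `t` is an injective endomorphism of the finite-dimensional space `L_{k+1}`.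
-/

section

variable {F : Type*} [DivisionRing F] {G : Subring F} {f : ℕ → F}

def SplitsBy (G : Subring F) (f : ℕ → F) (k : ℕ) (c : F) : Prop :=
  ∀ x : F, ∃ a ∈ Lset G f k, ∃ s ∈ Sset G f k, x = a + c * s

theorem mem_Lset_zero_iff (hf0 : f 0 = 1) {x : F} : x ∈ Lset G f 0 ↔ x ∈ G := by
  constructor
  · rintro ⟨c, hc, rfl⟩
    simpa [hf0] using hc 0
  · exact fun hx => ⟨fun _ => x, fun _ => hx, by simp [hf0]⟩

theorem mem_Sset_zero (hf0 : f 0 = 1) {b : F} (hb : b ∈ G) : b ∈ Sset G f 0 := fun x hx => by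
  rw [mem_Lset_zero_iff hf0] at hx ⊢
  exact G.mul_mem hx hb

theorem splitsBy_zero (hf0 : f 0 = 1) (T4 : ∀ x : F, ∃ a ∈ G, ∃ b ∈ G, x = a + f 1 * b) :
    SplitsBy G f 0 (f 1) := fun x => by
  obtain ⟨a, ha, b, hb, rfl⟩ := T4 x
  exact ⟨a, (mem_Lset_zero_iff hf0).2 ha, b, mem_Sset_zero hf0 hb, rfl⟩

theorem f_succ_notMem_Lset
    (T5 : ∀ c : ℕ → F, (∀ i, c i ∈ G) →
      ∀ m : ℕ, ∑ i ∈ Finset.range m, c i * f i = 0 → ∀ i < m, c i = 0)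
    (k : ℕ) : f (k + 1) ∉ Lset G f k := by
  rintro ⟨c, hc, hfc⟩
  have hd : ∀ i, Function.update c (k + 1) (-1) i ∈ G := fun i => by
    rcases eq_or_ne i (k + 1) with rfl | hi
    · simp [G.neg_mem G.one_mem]
    · simpa [hi] using hc i
  have hsum : ∑ i ∈ Finset.range (k + 2), Function.update c (k + 1) (-1) i * f i = 0 := by
    rw [Finset.sum_range_succ, Function.update_self, hfc, neg_one_mul, add_neg_eq_zero]
    refine Finset.sum_congr rfl fun i hi => ?_
    rw [Function.update_of_ne (by simp at hi; omega)]
  simpa using T5 _ hd (k + 2) hsum (k + 1) (by omega)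

theorem mul_mem_Sset {k : ℕ} {s t : F} (hs : s ∈ Sset G f k) (ht : t ∈ Sset G f k) :
    s * t ∈ Sset G f k := fun x hx => by
  rw [← mul_assoc]
  exact ht _ (hs _ hx)

variable {K : Subfield F}

variable (f K) in
abbrev Lspan (k : ℕ) : Submodule K F :=
  Submodule.span K (Set.range fun i : Fin (k + 1) => f i)

theorem mem_Lset_iff {k : ℕ} {x : F} : x ∈ Lset K.toSubring f k ↔ x ∈ Lspan f K k := by
  rw [Submodule.mem_span_range_iff_exists_fun]
  constructor
  · rintro ⟨c, hc, rfl⟩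
    exact ⟨fun i => ⟨c i, hc i⟩, by simp [Finset.sum_range]; rfl⟩
  · rintro ⟨c, rfl⟩
    refine ⟨fun i => if h : i < k + 1 then c ⟨i, h⟩ else 0, fun i => ?_, ?_⟩
    · dsimp only
      split_ifs
      exacts [(c _).2, K.zero_mem]
    · rw [← Fin.sum_univ_eq_sum_range]
      refine Finset.sum_congr rfl fun i _ => ?_
      simp only [i.is_lt, dif_pos, Fin.eta]
      rfl

theorem add_mem_Lset {k : ℕ} {x y : F} (hx : x ∈ Lset K.toSubring f k)
    (hy : y ∈ Lset K.toSubring f k) : x + y ∈ Lset K.toSubring f k := by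
  rw [mem_Lset_iff] at *
  exact add_mem hx hy

theorem sub_mem_Lset {k : ℕ} {x y : F} (hx : x ∈ Lset K.toSubring f k)
    (hy : y ∈ Lset K.toSubring f k) : x - y ∈ Lset K.toSubring f k := by
  rw [mem_Lset_iff] at *
  exact sub_mem hx hy

theorem f_mem_Lset {i k : ℕ} (hik : i ≤ k) : f i ∈ Lset K.toSubring f k :=
  mem_Lset_iff.2 (Submodule.subset_span ⟨⟨i, by omega⟩, rfl⟩)

theorem Lset_subset_succ (k : ℕ) : Lset K.toSubring f k ⊆ Lset K.toSubring f (k + 1) := by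
  intro x hx
  rw [mem_Lset_iff] at *
  refine Submodule.span_mono ?_ hx
  rintro _ ⟨i, rfl⟩
  exact ⟨i.castSucc, rfl⟩

theorem Sset_subset_Dset_succ (k : ℕ) : Sset K.toSubring f k ⊆ Dset K.toSubring f (k + 1) :=
  fun _ hr x hx => Lset_subset_succ k (hr x hx)

theorem inv_mem_Sset {k : ℕ} {t : F} (ht : t ∈ Sset K.toSubring f k) (ht0 : t ≠ 0) :
    t⁻¹ ∈ Sset K.toSubring f k := by
  intro x hx
  have hmaps : ∀ y ∈ Lspan f K k, LinearMap.mulRight K t y ∈ Lspan f K k := fun y hy => by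
    rw [← mem_Lset_iff] at hy ⊢
    exact ht y hy
  have : FiniteDimensional K (Lspan f K k) := .span_of_finite K (Set.finite_range _)
  let ρ := (LinearMap.mulRight K t).restrict hmaps
  have hρ : Function.Injective ρ := fun a b hab =>
    Subtype.ext (mul_right_cancel₀ ht0 (congrArg Subtype.val hab))
  obtain ⟨y, hy⟩ := LinearMap.injective_iff_surjective.1 hρ ⟨x, mem_Lset_iff.1 hx⟩
  have hyx : (y : F) * t = x := congrArg Subtype.val hy
  rw [← hyx, mul_inv_cancel_right₀ ht0, mem_Lset_iff]
  exact y.2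

theorem SplitsBy.succ_mul {k : ℕ} {b : F} (h : SplitsBy K.toSubring f k (f (k + 1)))
    (hb : ∀ x ∈ Dset K.toSubring f (k + 1), ∃ s ∈ Sset K.toSubring f (k + 1),
      ∃ t ∈ Sset K.toSubring f (k + 1), x = s + b * t) :
    SplitsBy K.toSubring f (k + 1) (f (k + 1) * b) := by
  intro x
  obtain ⟨a, ha, r, hr, rfl⟩ := h x
  obtain ⟨s, hs, t, ht, rfl⟩ := hb r (Sset_subset_Dset_succ k hr)
  refine ⟨a + f (k + 1) * s,
    add_mem_Lset (Lset_subset_succ k ha) (hs _ (f_mem_Lset le_rfl)), t, ht, ?_⟩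
  noncomm_ring

theorem SplitsBy.to_f_succ {k : ℕ} {c : F} (h : SplitsBy K.toSubring f k c)
    (hf : f (k + 1) ∉ Lset K.toSubring f k) : SplitsBy K.toSubring f k (f (k + 1)) := by
  obtain ⟨l, hl, t, ht, hft⟩ := h (f (k + 1))
  have ht0 : t ≠ 0 := by
    rintro rfl
    rw [mul_zero, add_zero] at hft
    exact hf (hft ▸ hl)
  have hc : c = (f (k + 1) - l) * t⁻¹ := by
    rw [hft, add_sub_cancel_left, mul_inv_cancel_right₀ ht0]
  have hti : t⁻¹ ∈ Sset K.toSubring f k := inv_mem_Sset ht ht0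
  intro x
  obtain ⟨a, ha, s, hs, rfl⟩ := h x
  refine ⟨a - l * (t⁻¹ * s), sub_mem_Lset ha (mul_mem_Sset hti hs l hl),
    t⁻¹ * s, mul_mem_Sset hti hs, ?_⟩
  rw [hc]
  noncomm_ring

theorem splitsBy_f_succ (hf0 : f 0 = 1)
    (T4 : ∀ x : F, ∃ a ∈ K, ∃ b ∈ K, x = a + f 1 * b)
    (T5 : ∀ c : ℕ → F, (∀ i, c i ∈ K) →
      ∀ m : ℕ, ∑ i ∈ Finset.range m, c i * f i = 0 → ∀ i < m, c i = 0)
    (T6 : ∀ k : ℕ, ∃ b : F, ∀ x ∈ Dset K.toSubring f (k + 1),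
      ∃ s ∈ Sset K.toSubring f (k + 1), ∃ t ∈ Sset K.toSubring f (k + 1), x = s + b * t) :
    ∀ k, SplitsBy K.toSubring f k (f (k + 1))
  | 0 => splitsBy_zero hf0 T4
  | k + 1 => by
    obtain ⟨b, hb⟩ := T6 k
    exact ((splitsBy_f_succ hf0 T4 T5 T6 k).succ_mul hb).to_f_succ (f_succ_notMem_Lset T5 (k + 1))

end

theorem stmt9 {F : Type*} [DivisionRing F]
    (G : Subring F) (hG : ∀ x ∈ G, x⁻¹ ∈ G)
    (f : ℕ → F) (hf0 : f 0 = 1)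
    -- (T4)
    (T4 : ∀ x : F, ∃ a ∈ G, ∃ b ∈ G, x = a + f 1 * b)
    -- (T5)
    (T5 : ∀ c : ℕ → F, (∀ i, c i ∈ G) →
      ∀ m : ℕ, ∑ i ∈ Finset.range m, c i * f i = 0 → ∀ i < m, c i = 0)
    -- (T6)
    (T6 : ∀ k : ℕ, 1 ≤ k → ∃ b ∈ Dset G f k,
      ∀ x ∈ Dset G f k, ∃ s ∈ Sset G f k, ∃ t ∈ Sset G f k, x = s + b * t) :
    ∀ k : ℕ, 1 ≤ k → ∀ x : F,
      ∃ a ∈ Lset G f (k - 1), ∃ s ∈ Sset G f (k - 1), x = a + f k * s := by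
  obtain ⟨K, rfl⟩ : ∃ K : Subfield F, K.toSubring = G := ⟨{ G with inv_mem' := hG }, rfl⟩
  intro k hk
  obtain ⟨k, rfl⟩ := Nat.exists_eq_add_of_le' hk
  rw [Nat.add_sub_cancel]
  exact splitsBy_f_succ hf0 T4 T5 (fun k => (T6 (k + 1) k.succ_pos).imp fun _ hb => hb.2) k
end
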